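/- Let μ be a join-semilattice with bottom. Then μ is a projective B-module if and only if μ is isomorphic to the module B(S,≤) of finitely generated lower subsets of a lower finite poset (S,≤). -/

import Mathlib

/-- Finitely generated lower subsets of a preordered set. -/
def FGLower (S : Type*) [Preorder S] : Type _ :=
  {L : LowerSet S // ∃ F : Finset S, L = lowerClosure (F : Set S)}

namespace FGLower

variable {S : Type*} [Preorder S]

instance : SemilatticeSup (FGLower S) :=
  Subtype.semilatticeSup fun L M ⟨F, hF⟩ ⟨G, hG⟩ => by
    classical
    exact ⟨F ∪ G, by simp [hF, hG, lowerClosure_union]⟩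

instance : OrderBot (FGLower S) :=
  Subtype.orderBot ⟨∅, by simp⟩

end FGLower

/-- A `𝔹`-module is projective if it is a retract of a free `𝔹`-module. -/
def IsProjectiveB (μ : Type) [SemilatticeSup μ] [OrderBot μ] : Prop :=
  ∃ T : Type, haveI := Classical.decEq T;
    ∃ (s : SupBotHom μ (Finset T)) (r : SupBotHom (Finset T) μ), ∀ x, r (s x) = x

/-!
For a lower finite poset `S`, listing the (finitely many) elements of a finitely generated lower
set and taking the lower closure of a finite set exhibit `B(S,≤)` as a retract of the free module
`Finset S`.

Conversely, let `r ∘ s = id` with `s : μ → Finset T`. Every `r {v}` with `v ∈ s (r {v})` is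
sup-prime, every `x` is a finite sup of such elements, and `μ` is lower finite because `s` is
injective and monotone. Hence `x ↦ {p sup-prime | p ≤ x}` identifies
`μ` with `B(S,≤)` for `S` the poset of sup-primes of `μ`.
-/

namespace FGLower

variable {S : Type*} [Preorder S]

@[simp] theorem val_sup (L M : FGLower S) : (L ⊔ M).1 = L.1 ⊔ M.1 := rfl

@[simp] theorem val_bot : (⊥ : FGLower S).1 = ⊥ := rfl

theorem finite_coe (hS : ∀ x : S, {y : S | y ≤ x}.Finite) (L : FGLower S) :
    (L.1 : Set S).Finite := by
  obtain ⟨F, hF⟩ := L.2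
  rw [hF, coe_lowerClosure]
  exact F.finite_toSet.biUnion fun a _ => hS a

end FGLower

theorem IsProjectiveB.of_orderIso {μ ν : Type} [SemilatticeSup μ] [OrderBot μ]
    [SemilatticeSup ν] [OrderBot ν] (h : IsProjectiveB ν) (e : μ ≃o ν) : IsProjectiveB μ := by
  obtain ⟨T, s, r, hrs⟩ := h
  let := Classical.decEq T
  exact ⟨T, s.comp e, (e.symm : SupBotHom ν μ).comp r, fun x => by simp [hrs]⟩

theorem isProjectiveB_fgLower (S : Type) [Preorder S] (hS : ∀ x : S, {y : S | y ≤ x}.Finite) :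
    IsProjectiveB (FGLower S) := by
  classical
  refine ⟨S, ⟨⟨fun L => (L.finite_coe hS).toFinset, fun L M => ?_⟩, ?_⟩,
    ⟨⟨fun F => ⟨lowerClosure (F : Set S), F, rfl⟩, fun F G => ?_⟩, ?_⟩, fun L => ?_⟩
  · ext; simp
  · ext; simp
  · apply Subtype.ext
    change lowerClosure ((F ∪ G : Finset S) : Set S) = lowerClosure F ⊔ lowerClosure G
    simp [lowerClosure_union]
  · apply Subtype.ext; simp
  · apply Subtype.ext
    change lowerClosure ((L.finite_coe hS).toFinset : Set S) = L.1
    rw [Set.Finite.coe_toFinset]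
    exact SetLike.coe_injective L.1.lower.lowerClosure

section Retract

variable {μ T : Type*} [SemilatticeSup μ] [OrderBot μ] [DecidableEq T]

theorem supPrime_of_mem_retract_singleton {s : SupBotHom μ (Finset T)}
    {r : SupBotHom (Finset T) μ} (hrs : ∀ x, r (s x) = x) {v : T} (hv : v ∈ s (r {v})) :
    SupPrime (r {v}) := by
  refine ⟨fun hmin => ?_, fun a b hab => ?_⟩
  · rw [isMin_iff_eq_bot.1 hmin, map_bot] at hv
    exact Finset.notMem_empty v hv
  · have hv' : v ∈ s a ∪ s b := by
      rw [← Finset.sup_eq_union, ← map_sup]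
      exact OrderHomClass.mono s hab hv
    refine (Finset.mem_union.1 hv').imp (fun ha => ?_) (fun hb => ?_)
    · rw [← hrs a]; exact OrderHomClass.mono r (Finset.singleton_subset_iff.2 ha)
    · rw [← hrs b]; exact OrderHomClass.mono r (Finset.singleton_subset_iff.2 hb)

theorem finite_Iic_of_retract {s : SupBotHom μ (Finset T)} {r : SupBotHom (Finset T) μ}
    (hrs : ∀ x, r (s x) = x) (x : μ) : (Set.Iic x).Finite :=
  ((s x).powerset.finite_toSet.preimage
    (Function.LeftInverse.injective hrs).injOn).subset
    fun _ hy => Finset.mem_powerset.2 (OrderHomClass.mono s hy)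

/-- Induction on `#(s x)`: either some `r {u}` with `u ∈ s x` already equals `x`, and then `x` is
sup-prime, or `x = ⨆ u ∈ s x, r {u}` with every `s (r {u})` strictly smaller than `s x`. -/
theorem exists_finset_supPrime_sup_eq_of_retract {s : SupBotHom μ (Finset T)}
    {r : SupBotHom (Finset T) μ} (hrs : ∀ x, r (s x) = x) (x : μ) :
    ∃ F : Finset {p : μ // SupPrime p}, F.sup Subtype.val = x := by
  classical
  induction hn : (s x).card using Nat.strong_induction_on generalizing x with
  | _ n ih =>
    by_cases hfix : ∃ u ∈ s x, s (r {u}) = s x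
    · obtain ⟨u, hu, hsu⟩ := hfix
      have hux : r {u} = x := by rw [← hrs x, ← hsu, hrs]
      exact ⟨{⟨x, hux ▸ supPrime_of_mem_retract_singleton hrs (hsu ▸ hu)⟩}, by simp⟩
    · push Not at hfix
      rw [← hrs x, ← Finset.sup_singleton_eq_self (s x), map_finset_sup]
      refine Finset.sup_induction
        (p := fun y => ∃ F : Finset {p : μ // SupPrime p}, F.sup Subtype.val = y) ⟨∅, rfl⟩
        (fun a ⟨F, hF⟩ b ⟨G, hG⟩ => ⟨F ∪ G, by rw [Finset.sup_union, hF, hG]⟩)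
        fun u hu => ih _ ?_ _ rfl
      have hsub : s (r {u}) ⊆ s x := by
        rw [← hrs x]
        exact OrderHomClass.mono s (OrderHomClass.mono r (Finset.singleton_subset_iff.2 hu))
      exact hn ▸ Finset.card_lt_card (Finset.ssubset_iff_subset_ne.2 ⟨hsub, hfix u hu⟩)

end Retract

section SupPrimeGenerated

variable {μ : Type*} [SemilatticeSup μ] [OrderBot μ]

theorem coe_lowerClosure_supPrime (F : Finset {p : μ // SupPrime p}) :
    (lowerClosure (F : Set {p : μ // SupPrime p}) : Set {p : μ // SupPrime p}) =
      {p | p.1 ≤ F.sup Subtype.val} := by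
  ext p
  simp only [coe_lowerClosure, Set.mem_iUnion, Set.mem_Iic, Finset.mem_coe, exists_prop,
    Set.mem_ofPred_eq, p.2.le_finset_sup, Subtype.coe_le_coe]

noncomputable def orderIsoFGLowerSupPrime
    (h : ∀ x : μ, ∃ F : Finset {p : μ // SupPrime p}, F.sup Subtype.val = x) :
    μ ≃o FGLower {p : μ // SupPrime p} :=
  let φ : μ → FGLower {p : μ // SupPrime p} := fun x =>
    ⟨⟨{p | p.1 ≤ x}, fun _ _ hba ha => le_trans hba ha⟩, by
      obtain ⟨F, rfl⟩ := h x
      exact ⟨F, SetLike.coe_injective (coe_lowerClosure_supPrime F).symm⟩⟩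
  RelIso.ofSurjective (OrderEmbedding.ofMapLEIff φ fun x y => ⟨fun hxy => by
      obtain ⟨F, rfl⟩ := h x
      exact Finset.sup_le fun p hp => hxy (Finset.le_sup (f := Subtype.val) hp),
      fun hxy _ hp => le_trans hp hxy⟩)
    (by
      rintro ⟨L, G, rfl⟩
      exact ⟨G.sup Subtype.val, Subtype.ext <| SetLike.coe_injective
        (coe_lowerClosure_supPrime G).symm⟩)

end SupPrimeGenerated

/-- A join-semilattice `μ` with bottom is a projective `𝔹`-module
iff it is isomorphic (as a `𝔹`-module, equivalently as a poset) to the module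
`B(S,≤)` of finitely generated lower subsets of a lower finite poset `(S,≤)`. -/
theorem stmt6 (μ : Type) [SemilatticeSup μ] [OrderBot μ] :
    IsProjectiveB μ ↔
      ∃ (S : Type) (inst : PartialOrder S), haveI := inst;
        (∀ x : S, {y : S | y ≤ x}.Finite) ∧ Nonempty (μ ≃o FGLower S) := by
  constructor
  · rintro ⟨T, s, r, hrs⟩
    let := Classical.decEq T
    exact ⟨{p : μ // SupPrime p}, inferInstance,
      fun p => (finite_Iic_of_retract hrs p.1).preimage Subtype.val_injective.injOn,
      ⟨orderIsoFGLowerSupPrime (exists_finset_supPrime_sup_eq_of_retract hrs)⟩⟩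
  · rintro ⟨S, inst, hS, ⟨e⟩⟩
    exact (isProjectiveB_fgLower S hS).of_orderIso e
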